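/- arXiv:1401.3187 — 3 statements merged into one kernel-verified Lean document; each statement's English description precedes it below -/
import Mathlib

section
/- Let G be a connected bipartite multigraph with bipartition V₁ ∪ V₂, and let A be an imprimitive block for Aut(G) with A ∩ V₁ ≠ ∅ and A ∩ V₂ ≠ ∅. If G is half-transitive, then the induced sub-multigraph G[A] is half-transitive (with respect to the bipartition (A ∩ V₁, A ∩ V₂)). -/
/-- A multigraph: multiple edges allowed (recorded as edge multiplicities), no loops. -/
structure Multigraph (V : Type*) where
  mult : V → V → ℕ
  symm : ∀ u v, mult u v = mult v u
  loopless : ∀ v, mult v v = 0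

namespace Multigraph

variable {V : Type*}

/-- Adjacency: at least one edge between `u` and `v`. -/
def Adj (G : Multigraph V) (u v : V) : Prop := 0 < G.mult u v

instance (G : Multigraph V) (v : V) : DecidablePred (G.Adj v) :=
  fun u => inferInstanceAs (Decidable (0 < G.mult v u))

/-- Reachability by walks. -/
def Reachable (G : Multigraph V) : V → V → Prop := Relation.ReflTransGen G.Adj

/-- A multigraph is connected if it is nonempty and every two vertices are joined by a walk. -/
def Connected (G : Multigraph V) : Prop := Nonempty V ∧ ∀ u v, G.Reachable u v

/-- An automorphism of a multigraph: a permutation preserving all edge multiplicities. -/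
def Aut (G : Multigraph V) : Type _ :=
  {e : Equiv.Perm V // ∀ u v, G.mult (e u) (e v) = G.mult u v}

/-- A set of edges of `G`, given by sub-multiplicities. -/
structure EdgeSub (G : Multigraph V) where
  f : V → V → ℕ
  symm : ∀ u v, f u v = f v u
  le : ∀ u v, f u v ≤ G.mult u v

/-- The multigraph obtained by deleting the edge set `F`. -/
def deleteEdges (G : Multigraph V) (F : G.EdgeSub) : Multigraph V where
  mult u v := G.mult u v - F.f u v
  symm u v := by (try dsimp only); rw [G.symm u v, F.symm u v]
  loopless v := by simp [G.loopless v]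

/-- `F` is an edge-cut if removing it disconnects `G`. -/
def IsEdgeCut (G : Multigraph V) (F : G.EdgeSub) : Prop := ¬ (G.deleteEdges F).Connected

/-- `F` is a restricted edge-cut if removing it disconnects `G` and leaves no isolated vertex. -/
def IsRestrictedEdgeCut (G : Multigraph V) (F : G.EdgeSub) : Prop :=
  G.IsEdgeCut F ∧ ∀ v, ∃ u, (G.deleteEdges F).Adj v u

/-- `G` is bipartite with parts `V₁`, `V₂`. -/
def IsBipartition [DecidableEq V] [Fintype V] (G : Multigraph V) (V₁ V₂ : Finset V) : Prop :=
  Disjoint V₁ V₂ ∧ V₁ ∪ V₂ = Finset.univ ∧ ∀ u v, G.Adj u v → (u ∈ V₁ ↔ v ∈ V₂)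

/-- A bipartite multigraph is half-transitive if `Aut G` is transitive on each part. -/
def IsHalfTransitive [DecidableEq V] [Fintype V] (G : Multigraph V) (V₁ V₂ : Finset V) : Prop :=
  G.IsBipartition V₁ V₂ ∧
  (∀ u ∈ V₁, ∀ v ∈ V₁, ∃ e : G.Aut, e.1 u = v) ∧
  (∀ u ∈ V₂, ∀ v ∈ V₂, ∃ e : G.Aut, e.1 u = v)

/-- An imprimitive block for `Aut G`. -/
def IsImprimitiveBlock [DecidableEq V] (G : Multigraph V) (A : Finset V) [Fintype V] : Prop :=
  A.Nonempty ∧ A ≠ Finset.univ ∧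
  ∀ e : G.Aut, A.image e.1 = A ∨ Disjoint (A.image e.1) A

/-- The induced sub-multigraph on a vertex set `S`. -/
def induce (G : Multigraph V) (S : Finset V) : Multigraph {x // x ∈ S} where
  mult a b := G.mult a.1 b.1
  symm a b := G.symm a.1 b.1
  loopless a := G.loopless a.1

section Fin

variable [Fintype V] [DecidableEq V]

/-- The degree of a vertex (counting multiplicities). -/
def degree (G : Multigraph V) (v : V) : ℕ := ∑ u, G.mult v u

/-- The minimum degree `δ(G)`. -/
noncomputable def minDegree (G : Multigraph V) : ℕ := sInf {n | ∃ v, G.degree v = n}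

/-- The maximum edge multiplicity `μ(G)`. -/
def maxMult (G : Multigraph V) : ℕ := Finset.univ.sup fun p : V × V => G.mult p.1 p.2

/-- `d(A)`: the number of edges between `A` and its complement. -/
def cut (G : Multigraph V) (A : Finset V) : ℕ := ∑ u ∈ A, ∑ v ∈ Aᶜ, G.mult u v

/-- The number of edges in an edge set. -/
def EdgeSub.card {G : Multigraph V} (F : G.EdgeSub) : ℕ := (∑ u, ∑ v, F.f u v) / 2

/-- The edge-boundary `N(A)` of a vertex set `A`, as an edge set. -/
def boundary (G : Multigraph V) (A : Finset V) : G.EdgeSub where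
  f u v := if (u ∈ A ∧ v ∉ A) ∨ (v ∈ A ∧ u ∉ A) then G.mult u v else 0
  symm u v := by
    try dsimp only
    by_cases h1 : u ∈ A <;> by_cases h2 : v ∈ A <;> simp [h1, h2, G.symm u v]
  le u v := by (try dsimp only); split_ifs <;> simp

/-- The edge-connectivity `λ(G)`. -/
noncomputable def edgeConn (G : Multigraph V) : ℕ :=
  sInf {n | ∃ F : G.EdgeSub, G.IsEdgeCut F ∧ F.card = n}

/-- The restricted edge-connectivity `λ'(G)`. -/
noncomputable def rEdgeConn (G : Multigraph V) : ℕ :=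
  sInf {n | ∃ F : G.EdgeSub, G.IsRestrictedEdgeCut F ∧ F.card = n}

/-- The minimum edge degree `ξ(G) = min {d(u)+d(v)-2μ(uv) : uv ∈ E}`. -/
noncomputable def minEdgeDegree (G : Multigraph V) : ℕ :=
  sInf {n | ∃ u v, G.Adj u v ∧ n = G.degree u + G.degree v - 2 * G.mult u v}

/-- A `λ`-fragment: a vertex set whose edge-boundary is a minimum edge-cut. -/
def IsFragment (G : Multigraph V) (A : Finset V) : Prop :=
  A.Nonempty ∧ Aᶜ.Nonempty ∧ G.IsEdgeCut (G.boundary A) ∧ G.cut A = G.edgeConn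

/-- A `λ`-atom: a `λ`-fragment of minimum cardinality. -/
def IsAtom (G : Multigraph V) (A : Finset V) : Prop :=
  G.IsFragment A ∧ ∀ B : Finset V, G.IsFragment B → A.card ≤ B.card

/-- A strict `λ`-fragment: a `λ`-fragment `C` with `2 ≤ |C| ≤ |V| - 2`. -/
def IsStrictFragment (G : Multigraph V) (A : Finset V) : Prop :=
  G.IsFragment A ∧ 2 ≤ A.card ∧ A.card ≤ Fintype.card V - 2

/-- A `λ`-superatom: a strict `λ`-fragment of minimum cardinality. -/
def IsSuperAtom (G : Multigraph V) (A : Finset V) : Prop :=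
  G.IsStrictFragment A ∧ ∀ B : Finset V, G.IsStrictFragment B → A.card ≤ B.card

/-- A `λ'`-fragment: a vertex set whose edge-boundary is a minimum restricted edge-cut. -/
def IsRFragment (G : Multigraph V) (A : Finset V) : Prop :=
  G.IsRestrictedEdgeCut (G.boundary A) ∧ G.cut A = G.rEdgeConn

/-- A `λ'`-atom: a `λ'`-fragment of minimum cardinality. -/
def IsRAtom (G : Multigraph V) (A : Finset V) : Prop :=
  G.IsRFragment A ∧ ∀ B : Finset V, G.IsRFragment B → A.card ≤ B.card

/-- `G` is super edge-connected if every minimum edge-cut is the set of all edges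
incident with some vertex. -/
def IsSuperEdgeConnected (G : Multigraph V) : Prop :=
  ∀ F : G.EdgeSub, G.IsEdgeCut F → F.card = G.edgeConn →
    ∃ v : V, ∀ u w : V, F.f u w = if u = v ∨ w = v then G.mult u w else 0

end Fin

end Multigraph

variable {V : Type*} [Fintype V] [DecidableEq V]

open Multigraph

namespace Multigraph

def Aut.restrict {G : Multigraph V} (e : G.Aut) (A : Finset V) (h : ∀ x, e.1 x ∈ A ↔ x ∈ A) :
    (G.induce A).Aut :=
  ⟨e.1.subtypePerm h, fun u v => e.2 u v⟩

variable {G : Multigraph V} {A : Finset V}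

theorem IsImprimitiveBlock.apply_mem_iff (hA : G.IsImprimitiveBlock A) (e : G.Aut) {a : V}
    (ha : a ∈ A) (hea : e.1 a ∈ A) (x : V) : e.1 x ∈ A ↔ x ∈ A := by
  rcases hA.2.2 e with hstab | hdisj
  · constructor
    · intro hx
      rw [← hstab] at hx
      obtain ⟨y, hy, hyx⟩ := Finset.mem_image.mp hx
      exact e.1.injective hyx ▸ hy
    · intro hx
      exact hstab ▸ Finset.mem_image_of_mem e.1 hx
  · exact absurd hea (Finset.disjoint_left.mp hdisj (Finset.mem_image_of_mem e.1 ha))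

theorem IsImprimitiveBlock.exists_induce_aut_apply_eq (hA : G.IsImprimitiveBlock A)
    {W : Finset V} (hW : ∀ u ∈ W, ∀ v ∈ W, ∃ e : G.Aut, e.1 u = v) :
    ∀ u ∈ Finset.univ.filter fun x : {x // x ∈ A} => x.1 ∈ W,
      ∀ v ∈ Finset.univ.filter fun x : {x // x ∈ A} => x.1 ∈ W,
        ∃ e : (G.induce A).Aut, e.1 u = v := by
  intro u hu v hv
  simp only [Finset.mem_filter, Finset.mem_univ, true_and] at hu hv
  obtain ⟨e, he⟩ := hW u hu v hv
  exact ⟨e.restrict A (hA.apply_mem_iff e u.2 (he ▸ v.2)), Subtype.ext he⟩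

theorem IsBipartition.induce {V₁ V₂ : Finset V} (hG : G.IsBipartition V₁ V₂) (A : Finset V) :
    (G.induce A).IsBipartition
      (Finset.univ.filter fun x : {x // x ∈ A} => x.1 ∈ V₁)
      (Finset.univ.filter fun x : {x // x ∈ A} => x.1 ∈ V₂) := by
  obtain ⟨hdisj, hcover, hadj⟩ := hG
  refine ⟨?_, ?_, fun u v huv => ?_⟩
  · exact Finset.disjoint_filter.mpr fun x _ hx₁ hx₂ => Finset.disjoint_left.mp hdisj hx₁ hx₂
  · ext x
    have hx : x.1 ∈ V₁ ∪ V₂ := hcover ▸ Finset.mem_univ x.1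
    simpa using hx
  · simpa using hadj u.1 v.1 huv

end Multigraph

theorem induce_isHalfTransitive_general (G : Multigraph V) (V₁ V₂ : Finset V)
    (A : Finset V) (hblock : G.IsImprimitiveBlock A)
    (hht : G.IsHalfTransitive V₁ V₂) :
    (G.induce A).IsHalfTransitive
      (Finset.univ.filter fun x : {x // x ∈ A} => x.1 ∈ V₁)
      (Finset.univ.filter fun x : {x // x ∈ A} => x.1 ∈ V₂) :=
  ⟨hht.1.induce A, hblock.exists_induce_aut_apply_eq hht.2.1,
    hblock.exists_induce_aut_apply_eq hht.2.2⟩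

/-- If `G` is a connected half-transitive bipartite multigraph and `A` is an imprimitive block
meeting both parts, then the induced sub-multigraph `G[A]` is half-transitive. -/
theorem induce_isHalfTransitive (G : Multigraph V) (V₁ V₂ : Finset V)
    (hG : G.Connected) (A : Finset V) (hblock : G.IsImprimitiveBlock A)
    (h1 : (A ∩ V₁).Nonempty) (h2 : (A ∩ V₂).Nonempty)
    (hht : G.IsHalfTransitive V₁ V₂) :
    (G.induce A).IsHalfTransitive
      (Finset.univ.filter fun x : {x // x ∈ A} => x.1 ∈ V₁)
      (Finset.univ.filter fun x : {x // x ∈ A} => x.1 ∈ V₂) :=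
  induce_isHalfTransitive_general G V₁ V₂ A hblock hht
end

section
/- Let G be a connected half-transitive multigraph with bipartition V₁ ∪ V₂, with part-degrees d₁ and d₂, and suppose G is not super edge-connected. If A and B are two distinct λ-superatoms with |A| = |B| ≥ 3, then A ∩ B = ∅. -/
variable {V : Type*} [Fintype V] [DecidableEq V]

open Multigraph

/-!
The cut function `d` is symmetric (`d(S) = d(Sᶜ)`) and submodular, hence also posimodular:
`d(A \ B) + d(B \ A) ≤ d(A) + d(B)`. Since `λ ≤ d(S)` for every nonempty proper `S`, for two
`λ`-fragments `A`, `B` the sets `A ∩ B` (when `A ∪ B ≠ V`) and `A \ B` (when `B ⊄ A`) are again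
`λ`-fragments. If superatoms `A ≠ B` of size `a ≥ 3` met in `c` vertices, then `c < a`, and
`2a ≤ |V|` because `Aᶜ` is a strict fragment too; so either `c ≥ 2` and `A ∩ B` is a smaller strict
fragment, or `c = 1` and `A \ B`, of size `a - 1 ≥ 2`, is one.
-/

open Finset

namespace Multigraph

section Cut

variable (G : Multigraph V)

theorem cut_eq_sum_ite (S : Finset V) :
    G.cut S = ∑ u, ∑ v, if u ∈ S ∧ v ∉ S then G.mult u v else 0 := by
  simp [cut, ite_and, ← mem_compl, sum_ite_mem]

theorem cut_compl (S : Finset V) : G.cut Sᶜ = G.cut S := by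
  rw [cut_eq_sum_ite, cut_eq_sum_ite, sum_comm]
  simp only [mem_compl, not_not, G.symm, and_comm]

theorem card_boundary (S : Finset V) : (G.boundary S).card = G.cut S := by
  have hsplit : ∀ u v, (G.boundary S).f u v
      = (if u ∈ S ∧ v ∉ S then G.mult u v else 0)
        + if v ∈ S ∧ u ∉ S then G.mult v u else 0 := by
    intro u v
    by_cases hu : u ∈ S <;> by_cases hv : v ∈ S <;> simp [boundary, hu, hv, G.symm u v]
  have hsum : ∑ u, ∑ v, (G.boundary S).f u v = 2 * G.cut S := by
    simp only [hsplit, sum_add_distrib]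
    rw [sum_comm (f := fun u v => if v ∈ S ∧ u ∉ S then G.mult v u else 0), ← cut_eq_sum_ite]
    ring
  rw [EdgeSub.card, hsum, Nat.mul_div_cancel_left _ two_pos]

theorem isEdgeCut_boundary {S : Finset V} (hS : S.Nonempty) (hSc : Sᶜ.Nonempty) :
    G.IsEdgeCut (G.boundary S) := by
  rintro ⟨-, hreach⟩
  obtain ⟨x, hx⟩ := hS
  obtain ⟨y, hy⟩ := hSc
  have hstay : ∀ b, (G.deleteEdges (G.boundary S)).Reachable x b → b ∈ S := by
    intro b hb
    induction hb with
    | refl => exact hx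
    | @tail b c _ hbc hb =>
      by_contra hc
      have hcut : ¬ (G.deleteEdges (G.boundary S)).Adj b c := by
        simp [Adj, deleteEdges, boundary, hb, hc]
      exact hcut hbc
  exact mem_compl.mp hy (hstay y (hreach x y))

theorem edgeConn_le_cut {S : Finset V} (hS : S.Nonempty) (hSc : Sᶜ.Nonempty) :
    G.edgeConn ≤ G.cut S :=
  Nat.sInf_le ⟨G.boundary S, G.isEdgeCut_boundary hS hSc, G.card_boundary S⟩

theorem cut_inter_add_cut_union_le (A B : Finset V) :
    G.cut (A ∩ B) + G.cut (A ∪ B) ≤ G.cut A + G.cut B := by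
  simp only [cut_eq_sum_ite, ← sum_add_distrib]
  refine sum_le_sum fun u _ => sum_le_sum fun v _ => ?_
  by_cases h1 : u ∈ A <;> by_cases h2 : u ∈ B <;> by_cases h3 : v ∈ A <;>
    by_cases h4 : v ∈ B <;> simp [h1, h2, h3, h4]

theorem cut_sdiff_add_cut_sdiff_le (A B : Finset V) :
    G.cut (A \ B) + G.cut (B \ A) ≤ G.cut A + G.cut B := by
  have h := G.cut_inter_add_cut_union_le A Bᶜ
  have hunion : A ∪ Bᶜ = (B \ A)ᶜ := by
    rw [sdiff_eq_inter_compl, compl_inter, compl_compl, union_comm]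
  rwa [← sdiff_eq_inter_compl, hunion, cut_compl, cut_compl] at h

end Cut

section Fragment

variable {G : Multigraph V}

theorem isFragment_of_cut_eq {S : Finset V} (hS : S.Nonempty) (hSc : Sᶜ.Nonempty)
    (hcut : G.cut S = G.edgeConn) : G.IsFragment S :=
  ⟨hS, hSc, G.isEdgeCut_boundary hS hSc, hcut⟩

theorem IsFragment.compl {S : Finset V} (hS : G.IsFragment S) : G.IsFragment Sᶜ :=
  isFragment_of_cut_eq hS.2.1 (by simpa using hS.1) (by rw [cut_compl]; exact hS.2.2.2)

theorem isFragment_of_cut_add_cut_le {A B X Y : Finset V} (hA : G.IsFragment A)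
    (hB : G.IsFragment B) (hX : X.Nonempty) (hXc : Xᶜ.Nonempty) (hY : Y.Nonempty)
    (hYc : Yᶜ.Nonempty) (hle : G.cut X + G.cut Y ≤ G.cut A + G.cut B) : G.IsFragment X := by
  have hXle := G.edgeConn_le_cut hX hXc
  have hYle := G.edgeConn_le_cut hY hYc
  exact isFragment_of_cut_eq hX hXc (by have := hA.2.2.2; have := hB.2.2.2; omega)

theorem IsFragment.inter {A B : Finset V} (hA : G.IsFragment A) (hB : G.IsFragment B)
    (hAB : (A ∩ B).Nonempty) (hAB' : (A ∪ B)ᶜ.Nonempty) : G.IsFragment (A ∩ B) :=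
  isFragment_of_cut_add_cut_le hA hB hAB
    (hA.2.1.mono (compl_subset_compl.mpr inter_subset_left))
    (hA.1.mono subset_union_left) hAB' (G.cut_inter_add_cut_union_le A B)

theorem IsFragment.sdiff {A B : Finset V} (hA : G.IsFragment A) (hB : G.IsFragment B)
    (hAB : (A \ B).Nonempty) (hBA : (B \ A).Nonempty) : G.IsFragment (A \ B) :=
  isFragment_of_cut_add_cut_le hA hB hAB (hB.1.mono fun _ => by simp_all) hBA
    (hA.1.mono fun _ => by simp_all) (G.cut_sdiff_add_cut_sdiff_le A B)

theorem IsStrictFragment.compl {S : Finset V} (hS : G.IsStrictFragment S) :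
    G.IsStrictFragment Sᶜ := by
  obtain ⟨hfrag, hlo, hhi⟩ := hS
  have := S.card_le_univ
  exact ⟨hfrag.compl, by rw [card_compl]; omega, by rw [card_compl]; omega⟩

theorem IsSuperAtom.two_mul_card_le {A : Finset V} (hA : G.IsSuperAtom A) :
    2 * #A ≤ Fintype.card V := by
  have h := hA.2 _ hA.1.compl
  have := A.card_le_univ
  rw [card_compl] at h
  omega

end Fragment

end Multigraph

theorem superAtoms_disjoint_general (G : Multigraph V) (A B : Finset V)
    (hA : G.IsSuperAtom A) (hB : G.IsSuperAtom B) (hAB : A ≠ B)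
    (hcard : A.card = B.card) (h3 : 3 ≤ A.card) :
    Disjoint A B := by
  rw [disjoint_iff_inter_eq_empty, ← not_nonempty_iff_eq_empty]
  intro hInter
  have hn := hA.two_mul_card_le
  have hlt : #(A ∩ B) < #A := card_lt_card <| inter_subset_left.ssubset_of_ne fun h =>
    hAB (eq_of_subset_of_card_le (inter_eq_left.mp h) hcard.ge)
  have hunion := card_union_add_card_inter A B
  obtain hc2 | hc1 : 2 ≤ #(A ∩ B) ∨ #(A ∩ B) = 1 := by have := hInter.card_pos; omega
  · have hfrag := hA.1.1.inter hB.1.1 hInter (by rw [← card_pos, card_compl]; omega)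
    have := hA.2 _ ⟨hfrag, hc2, by omega⟩
    omega
  · have hA' := card_sdiff_add_card_inter A B
    have hB' := card_sdiff_add_card_inter B A
    rw [inter_comm] at hB'
    have hfrag := hA.1.1.sdiff hB.1.1 (card_pos.mp (by omega)) (card_pos.mp (by omega))
    have := hA.2 _ ⟨hfrag, by omega, by omega⟩
    omega

/-- In a connected half-transitive multigraph which is not super edge-connected, two distinct
`λ`-superatoms `A`, `B` with `|A| = |B| ≥ 3` are disjoint. -/
theorem superAtoms_disjoint (G : Multigraph V) (V₁ V₂ : Finset V) (d₁ d₂ : ℕ)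
    (hG : G.Connected) (hht : G.IsHalfTransitive V₁ V₂)
    (hd1 : ∀ v ∈ V₁, G.degree v = d₁) (hd2 : ∀ v ∈ V₂, G.degree v = d₂)
    (hns : ¬ G.IsSuperEdgeConnected) (A B : Finset V)
    (hA : G.IsSuperAtom A) (hB : G.IsSuperAtom B) (hAB : A ≠ B)
    (hcard : A.card = B.card) (h3 : 3 ≤ A.card) :
    Disjoint A B :=
  superAtoms_disjoint_general G A B hA hB hAB hcard h3
end

section
/- There exists a vertex-transitive multigraph that is not maximally edge-connected: the multigraph obtained from the 4-cycle C₄ by replacing each edge of one pair of opposite edges with m ≥ 2 parallel edges satisfies λ(G) = 2 < m+1 = δ(G) and is vertex-transitive. -/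
variable {V : Type*} [Fintype V] [DecidableEq V]

open Multigraph


/-- The multigraph obtained from the 4-cycle `C₄` by replacing each edge of one pair of
opposite edges by `m` parallel edges. -/
def C4m (m : ℕ) : Multigraph (Fin 4) where
  mult u v :=
    (if (u.val = 0 ∧ v.val = 1) ∨ (u.val = 1 ∧ v.val = 0) ∨
        (u.val = 2 ∧ v.val = 3) ∨ (u.val = 3 ∧ v.val = 2) then m else 0) +
    (if (u.val = 1 ∧ v.val = 2) ∨ (u.val = 2 ∧ v.val = 1) ∨
        (u.val = 3 ∧ v.val = 0) ∨ (u.val = 0 ∧ v.val = 3) then 1 else 0)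
  symm u v := by
    try dsimp only
    congr 1 <;> exact if_congr (by tauto) rfl rfl
  loopless v := by
    try dsimp only
    rw [if_neg (by omega), if_neg (by omega)]

/-! The multiplicity of an edge `uv` of `C4m m` depends only on `u ^^^ v`, so the translations
`x ↦ x ^^^ k` of the Klein four-group structure on `Fin 4` are automorphisms, and they act
transitively. Every vertex has degree `m + 1`. The two simple edges form the boundary of `{0, 1}`,
a cut of size 2; deleting at most one edge leaves, as `m ≥ 2`, both `m`-fold edges and one
simple edge, a Hamiltonian path, so `λ = 2`. -/

namespace Multigraph

section Connectivity

variable {α : Type*} {G : Multigraph α}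

theorem Adj.symm {u v : α} (h : G.Adj u v) : G.Adj v u := by
  rwa [Adj, G.symm]

theorem Reachable.symm {u v : α} (h : G.Reachable u v) : G.Reachable v u := by
  induction h with
  | refl => exact .refl
  | tail _ hadj ih => exact .head hadj.symm ih

theorem connected_of_forall_reachable (a : α) (h : ∀ v, G.Reachable a v) : G.Connected :=
  ⟨⟨a⟩, fun u v => (h u).symm.trans (h v)⟩

theorem not_connected_of_adj_closed (S : Set α) (hS : ∀ u v, G.Adj u v → u ∈ S → v ∈ S)
    {a b : α} (ha : a ∈ S) (hb : b ∉ S) : ¬ G.Connected := by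
  rintro ⟨-, hconn⟩
  have hreach : ∀ v, G.Reachable a v → v ∈ S := fun v h => by
    induction h with
    | refl => exact ha
    | tail _ hadj ih => exact hS _ _ hadj ih
  exact hb (hreach b (hconn a b))

theorem deleteEdges_adj_of_lt {F : G.EdgeSub} {u v : α} (h : F.f u v < G.mult u v) :
    (G.deleteEdges F).Adj u v :=
  Nat.sub_pos_of_lt h

end Connectivity

theorem isEdgeCut_boundary_s16 {α : Type*} [DecidableEq α] {G : Multigraph α} {A : Finset α}
    {a b : α} (ha : a ∈ A) (hb : b ∉ A) : G.IsEdgeCut (G.boundary A) := by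
  refine not_connected_of_adj_closed (A : Set α) (fun u v hadj hu => ?_) ha hb
  by_contra hv
  have hcross : (G.boundary A).f u v = G.mult u v := if_pos (Or.inl ⟨hu, hv⟩)
  exact (Nat.sub_pos_iff_lt.mp hadj).ne hcross

theorem card_boundary_s16 {α : Type*} [Fintype α] [DecidableEq α] (G : Multigraph α)
    (A : Finset α) : (G.boundary A).card = G.cut A := by
  have hsplit : ∀ u v, (G.boundary A).f u v =
      (if u ∈ A ∧ v ∉ A then G.mult u v else 0) + (if v ∈ A ∧ u ∉ A then G.mult v u else 0) := by
    intro u v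
    by_cases hu : u ∈ A <;> by_cases hv : v ∈ A <;> simp [boundary, hu, hv, G.symm u v]
  have hhalf : ∑ u, ∑ v, (if u ∈ A ∧ v ∉ A then G.mult u v else 0) = G.cut A := by
    simp only [cut, ite_and, ← Finset.mem_compl, Finset.sum_ite_irrel, Finset.sum_const_zero,
      Finset.sum_ite_mem, Finset.univ_inter]
  have htotal : ∑ u, ∑ v, (G.boundary A).f u v = 2 * G.cut A := by
    simp only [hsplit, Finset.sum_add_distrib]
    rw [Finset.sum_comm (f := fun u v => if v ∈ A ∧ u ∉ A then G.mult v u else 0), hhalf]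
    ring
  rw [EdgeSub.card, htotal, Nat.mul_div_cancel_left _ two_pos]

theorem EdgeSub.add_le_card {α : Type*} [Fintype α] {G : Multigraph α} (F : G.EdgeSub)
    {u v x y : α} (huv : u ≠ v) (hxy : x ≠ y) (hne : s(u, v) ≠ s(x, y)) :
    F.f u v + F.f x y ≤ F.card := by
  classical
  rw [Ne, Sym2.eq_iff] at hne
  have hpairs : ∑ p ∈ {(u, v), (v, u), (x, y), (y, x)}, F.f p.1 p.2 =
      2 * (F.f u v + F.f x y) := by
    rw [Finset.sum_insert, Finset.sum_insert, Finset.sum_pair, F.symm v u, F.symm y x]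
    · ring
    all_goals simp only [ne_eq, Finset.mem_insert, Finset.mem_singleton, Prod.ext_iff]; tauto
  have hle : 2 * (F.f u v + F.f x y) ≤ ∑ a, ∑ b, F.f a b := by
    rw [← hpairs, ← Fintype.sum_prod_type']
    exact Finset.sum_le_univ_sum_of_nonneg fun _ => Nat.zero_le _
  rw [EdgeSub.card]
  omega

theorem edgeConn_eq_of_isEdgeCut {α : Type*} [Fintype α] {G : Multigraph α} {F : G.EdgeSub}
    (hF : G.IsEdgeCut F) (hmin : ∀ F' : G.EdgeSub, G.IsEdgeCut F' → F.card ≤ F'.card) :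
    G.edgeConn = F.card :=
  IsLeast.csInf_eq ⟨⟨F, hF, rfl⟩, by rintro _ ⟨F', hF', rfl⟩; exact hmin F' hF'⟩

theorem minDegree_eq_of_forall_degree_eq {α : Type*} [Fintype α] [Nonempty α]
    {G : Multigraph α} {d : ℕ} (h : ∀ v, G.degree v = d) : G.minDegree = d := by
  have hset : {n | ∃ v, G.degree v = n} = {d} := by
    ext n
    exact ⟨fun ⟨v, hv⟩ => hv ▸ h v, fun hn => ⟨Classical.arbitrary α, (h _).trans hn.symm⟩⟩
  rw [minDegree, hset, csInf_singleton]

def IsVertexTransitive {α : Type*} (G : Multigraph α) : Prop :=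
  ∀ u v, ∃ e : G.Aut, e.1 u = v

theorem connected_of_adj_fin_four {G : Multigraph (Fin 4)} (h01 : G.Adj 0 1) (h23 : G.Adj 2 3)
    (h : G.Adj 1 2 ∨ G.Adj 0 3) : G.Connected := by
  have r01 : G.Reachable 0 1 := .single h01
  obtain ⟨r02, r03⟩ : G.Reachable 0 2 ∧ G.Reachable 0 3 := by
    rcases h with h12 | h03
    · exact ⟨r01.tail h12, (r01.tail h12).tail h23⟩
    · exact ⟨(Relation.ReflTransGen.single h03).tail h23.symm, .single h03⟩
  refine connected_of_forall_reachable 0 fun v => ?_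
  fin_cases v
  exacts [.refl, r01, r02, r03]

end Multigraph

namespace C4m

theorem mult_xor (m : ℕ) (u v k : Fin 4) :
    (C4m m).mult (u ^^^ k) (v ^^^ k) = (C4m m).mult u v := by
  fin_cases u <;> fin_cases v <;> fin_cases k <;> rfl

def xorAut (m : ℕ) (k : Fin 4) : (C4m m).Aut :=
  ⟨Function.Involutive.toPerm (· ^^^ k) fun x => by revert x k; decide, fun u v => mult_xor m u v k⟩

theorem isVertexTransitive (m : ℕ) : (C4m m).IsVertexTransitive := fun u v =>
  ⟨xorAut m (u ^^^ v), show u ^^^ (u ^^^ v) = v by revert u v; decide⟩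

theorem degree_eq (m : ℕ) (v : Fin 4) : (C4m m).degree v = m + 1 := by
  fin_cases v <;> simp [Multigraph.degree, Fin.sum_univ_four, C4m, add_comm]

theorem two_le_card_of_isEdgeCut {m : ℕ} (hm : 2 ≤ m) {F : (C4m m).EdgeSub}
    (hF : (C4m m).IsEdgeCut F) : 2 ≤ F.card := by
  by_contra! hlt
  have heavy : F.f 0 1 + F.f 2 3 ≤ F.card := F.add_le_card (by decide) (by decide) (by decide)
  have light : F.f 1 2 + F.f 0 3 ≤ F.card := F.add_le_card (by decide) (by decide) (by decide)
  have hmult : (C4m m).mult 0 1 = m ∧ (C4m m).mult 2 3 = m ∧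
      (C4m m).mult 1 2 = 1 ∧ (C4m m).mult 0 3 = 1 := ⟨rfl, rfl, rfl, rfl⟩
  refine hF (connected_of_adj_fin_four (deleteEdges_adj_of_lt ?_) (deleteEdges_adj_of_lt ?_) ?_)
  · omega
  · omega
  · by_cases h12 : F.f 1 2 = 0
    · exact .inl (deleteEdges_adj_of_lt (by omega))
    · exact .inr (deleteEdges_adj_of_lt (by omega))

theorem edgeConn_eq {m : ℕ} (hm : 2 ≤ m) : (C4m m).edgeConn = 2 := by
  have hcut : (C4m m).IsEdgeCut ((C4m m).boundary {0, 1}) :=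
    isEdgeCut_boundary_s16 (a := 0) (b := 2) (by decide) (by decide)
  have hcard : ((C4m m).boundary {0, 1}).card = 2 := by
    rw [card_boundary_s16]
    rfl
  rw [edgeConn_eq_of_isEdgeCut hcut fun F hF => hcard ▸ two_le_card_of_isEdgeCut hm hF, hcard]

theorem minDegree_eq (m : ℕ) : (C4m m).minDegree = m + 1 :=
  minDegree_eq_of_forall_degree_eq (degree_eq m)

end C4m

/-- `C4m m` (for `m ≥ 2`) is a vertex-transitive multigraph which is not maximally
edge-connected: `λ(G) = 2 < m + 1 = δ(G)`. -/
theorem C4m_vertexTransitive_not_maximallyEdgeConnected (m : ℕ) (hm : 2 ≤ m) :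
    (∀ u v : Fin 4, ∃ e : (C4m m).Aut, e.1 u = v) ∧
    (C4m m).edgeConn = 2 ∧ (C4m m).minDegree = m + 1 ∧
    (C4m m).edgeConn < (C4m m).minDegree := by
  refine ⟨C4m.isVertexTransitive m, C4m.edgeConn_eq hm, C4m.minDegree_eq m, ?_⟩
  rw [C4m.edgeConn_eq hm, C4m.minDegree_eq m]
  omega
end
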